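/- arXiv:2405.18865 — 2 statements merged into one kernel-verified Lean document; each statement's English description precedes it below -/
import Mathlib

section
/- Let (V,g) be a finite-dimensional real vector space with a nondegenerate symmetric bilinear form g, let B be a (0,4)-tensor expressible as B = (φ/2)·A∧A + μ·g∧A + (η/2)·g∧g with A a symmetric bilinear form and φ, μ, η ∈ ℝ, φ ≠ 0, and suppose dim V = n ≥ 3. Then A² = φ⁻¹·((φ·tr(A) + (n−2)μ)·A + (μ·tr(A) + (n−1)η)·g − Ric(B)), where Ric(B) is the g-Ricci contraction of B and A² the g-square of A. -/
/-!
In a pseudo-orthonormal basis every vector expands as `x = ∑ εᵢ g(x, eᵢ) eᵢ`, so contracting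
against `g` is evaluation. This makes the Ricci contraction of each Kulkarni–Nomizu term explicit:
`Ric(g ∧ T) = (n - 2) T + tr(T) g` and `Ric(A ∧ A) = 2 (tr(A) A - A²)`. Since `Ric` is linear in
`B`, `Ric(B)` is a combination of `A²`, `A` and `g`, which is solved for `A²` because `φ ≠ 0`.
-/

variable {V : Type*} [AddCommGroup V] [Module ℝ V]

/-- Kulkarni–Nomizu product of two (0,2)-tensors. -/
def kn (A B : V → V → ℝ) : V → V → V → V → ℝ := fun x1 x2 x3 x4 =>
  A x1 x4 * B x2 x3 + A x2 x3 * B x1 x4 - A x1 x3 * B x2 x4 - A x2 x4 * B x1 x3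

/-- The endomorphism `(X ∧_A Y)Z = A(Y,Z)X − A(X,Z)Y`. -/
def wedgeV (A : V → V → ℝ) (x y z : V) : V := A y z • x - A x z • y

/-- Tachibana tensor `Q(A,T)` of a (0,2)-tensor `A` and a (0,4)-tensor `T`. -/
def Q4 (A : V → V → ℝ) (T : V → V → V → V → ℝ) : V → V → V → V → V → V → ℝ :=
  fun x1 x2 x3 x4 x y =>
    -(T (wedgeV A x y x1) x2 x3 x4) - T x1 (wedgeV A x y x2) x3 x4
      - T x1 x2 (wedgeV A x y x3) x4 - T x1 x2 x3 (wedgeV A x y x4)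

structure IsPseudoOrthonormal {ι : Type*} [DecidableEq ι] (g : V →ₗ[ℝ] V →ₗ[ℝ] ℝ) (e : ι → V)
    (ε : ι → ℝ) : Prop where
  apply_apply : ∀ i j, g (e i) (e j) = if i = j then ε i else 0
  sq_eq_one : ∀ i, ε i ^ 2 = 1

def ricci {W ι : Type*} [Fintype ι] (e : ι → W) (ε : ι → ℝ) (T : W → W → W → W → ℝ) (x y : W) :
    ℝ :=
  ∑ i, ε i * T (e i) x y (e i)

section Ricci

variable {ι : Type*} [Fintype ι] {ε : ι → ℝ}

theorem ricci_add {W : Type*} {e : ι → W} (T T' : W → W → W → W → ℝ) (x y : W) :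
    ricci e ε (T + T') x y = ricci e ε T x y + ricci e ε T' x y := by
  simp only [ricci, Pi.add_apply, mul_add, Finset.sum_add_distrib]

theorem ricci_smul {W : Type*} {e : ι → W} (c : ℝ) (T : W → W → W → W → ℝ) (x y : W) :
    ricci e ε (c • T) x y = c * ricci e ε T x y := by
  simp only [ricci, Pi.smul_apply, smul_eq_mul, Finset.mul_sum]
  exact Finset.sum_congr rfl fun i _ => by ring

theorem ricci_kn {e : ι → V} (S T : V →ₗ[ℝ] V →ₗ[ℝ] ℝ) (x y : V) :
    ricci e ε (kn (fun u v => S u v) (fun u v => T u v)) x y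
      = (∑ i, ε i * S (e i) (e i)) * T x y + S x y * ∑ i, ε i * T (e i) (e i)
        - ∑ i, ε i * S (e i) y * T x (e i) - ∑ i, ε i * S x (e i) * T (e i) y := by
  simp only [ricci, kn, Finset.sum_mul, Finset.mul_sum, ← Finset.sum_sub_distrib,
    ← Finset.sum_add_distrib]
  exact Finset.sum_congr rfl fun i _ => by ring

end Ricci

namespace IsPseudoOrthonormal

variable {ι : Type*} [Fintype ι] [DecidableEq ι] {g : V →ₗ[ℝ] V →ₗ[ℝ] ℝ} {e : Module.Basis ι ℝ V}
  {ε : ι → ℝ}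

theorem repr_eq_left (h : IsPseudoOrthonormal g e ε) (x : V) (i : ι) :
    e.repr x i = ε i * g x (e i) := by
  conv_rhs => rw [← e.sum_repr x]
  simp only [map_sum, map_smul, LinearMap.sum_apply, LinearMap.smul_apply, smul_eq_mul,
    h.apply_apply, mul_ite, mul_zero, Finset.sum_ite_eq', Finset.mem_univ, if_true]
  linear_combination -e.repr x i * h.sq_eq_one i

theorem repr_eq_right (h : IsPseudoOrthonormal g e ε) (x : V) (i : ι) :
    e.repr x i = ε i * g (e i) x := by
  conv_rhs => rw [← e.sum_repr x]
  simp only [map_sum, map_smul, smul_eq_mul, h.apply_apply, mul_ite, mul_zero,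
    Finset.sum_ite_eq, Finset.mem_univ, if_true]
  linear_combination -e.repr x i * h.sq_eq_one i

theorem sum_mul_left (h : IsPseudoOrthonormal g e ε) (S : V →ₗ[ℝ] V →ₗ[ℝ] ℝ) (x y : V) :
    ∑ i, ε i * g x (e i) * S (e i) y = S x y := by
  conv_rhs => rw [← e.sum_repr x]
  simp only [map_sum, map_smul, LinearMap.sum_apply, LinearMap.smul_apply, smul_eq_mul,
    h.repr_eq_left]

theorem sum_mul_right (h : IsPseudoOrthonormal g e ε) (S : V →ₗ[ℝ] V →ₗ[ℝ] ℝ) (x y : V) :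
    ∑ i, ε i * g (e i) y * S x (e i) = S x y := by
  conv_rhs => rw [← e.sum_repr y]
  simp only [map_sum, map_smul, smul_eq_mul, h.repr_eq_right]

theorem sum_mul_apply_self (h : IsPseudoOrthonormal g e ε) :
    ∑ i, ε i * g (e i) (e i) = Fintype.card ι := by
  simp only [h.apply_apply, if_true, ← sq, h.sq_eq_one, Finset.sum_const, Finset.card_univ,
    nsmul_eq_mul, mul_one]

theorem trace_eq_sum (h : IsPseudoOrthonormal g e ε) (f : V →ₗ[ℝ] V) :
    LinearMap.trace ℝ V f = ∑ i, ε i * g (f (e i)) (e i) := by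
  rw [LinearMap.trace_eq_matrix_trace ℝ e f, Matrix.trace]
  exact Finset.sum_congr rfl fun i _ => by
    rw [Matrix.diag_apply, LinearMap.toMatrix_apply, h.repr_eq_left]

theorem ricci_kn_left (h : IsPseudoOrthonormal g e ε) (T : V →ₗ[ℝ] V →ₗ[ℝ] ℝ) (x y : V) :
    ricci e ε (kn (fun u v => g u v) (fun u v => T u v)) x y
      = ((Fintype.card ι : ℝ) - 2) * T x y + (∑ i, ε i * T (e i) (e i)) * g x y := by
  rw [ricci_kn, h.sum_mul_apply_self, h.sum_mul_right, h.sum_mul_left]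
  ring

theorem ricci_kn_self (h : IsPseudoOrthonormal g e ε) {A : V →ₗ[ℝ] V →ₗ[ℝ] ℝ} {a : V →ₗ[ℝ] V}
    (ha : ∀ x y, g (a x) y = A x y) (x y : V) :
    ricci e ε (kn (fun u v => A u v) (fun u v => A u v)) x y
      = 2 * ((∑ i, ε i * A (e i) (e i)) * A x y - A (a x) y) := by
  have hsq : ∑ i, ε i * A x (e i) * A (e i) y = A (a x) y := by
    simpa only [ha] using h.sum_mul_left A (a x) y
  rw [ricci_kn, ← hsq]
  simp only [mul_right_comm _ (A (e _) y)]
  ring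

end IsPseudoOrthonormal

theorem stmt_17_general {V : Type*} [AddCommGroup V] [Module ℝ V]
    (n : ℕ)
    (g A : V →ₗ[ℝ] V →ₗ[ℝ] ℝ)
    (a : V →ₗ[ℝ] V) (ha : ∀ x y, g (a x) y = A x y)
    (e : Module.Basis (Fin n) ℝ V) (ε : Fin n → ℝ) (hε : ∀ i, ε i = 1 ∨ ε i = -1)
    (horth : ∀ i j, g (e i) (e j) = if i = j then ε i else 0)
    (B : V → V → V → V → ℝ)
    (RicB : V → V → ℝ)
    (hRicB : ∀ x y, RicB x y = ∑ i, ε i * B (e i) x y (e i))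
    (φ μ η : ℝ) (hφ : φ ≠ 0)
    (hB : ∀ x₁ x₂ x₃ x₄ : V,
      B x₁ x₂ x₃ x₄
        = (φ / 2) * kn (fun u v => A u v) (fun u v => A u v) x₁ x₂ x₃ x₄
          + μ * kn (fun u v => g u v) (fun u v => A u v) x₁ x₂ x₃ x₄
          + (η / 2) * kn (fun u v => g u v) (fun u v => g u v) x₁ x₂ x₃ x₄) :
    ∀ x y : V,
      A (a x) y
        = φ⁻¹ * ((φ * LinearMap.trace ℝ V a + ((n : ℝ) - 2) * μ) * A x y
            + (μ * LinearMap.trace ℝ V a + ((n : ℝ) - 1) * η) * g x y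
            - RicB x y) := by
  intro x y
  have hP : IsPseudoOrthonormal g e ε := ⟨horth, fun i => by rcases hε i with h | h <;> simp [h]⟩
  have hB' : B = (φ / 2) • kn (fun u v => A u v) (fun u v => A u v)
      + μ • kn (fun u v => g u v) (fun u v => A u v)
      + (η / 2) • kn (fun u v => g u v) (fun u v => g u v) :=
    funext fun _ => funext fun _ => funext fun _ => funext fun _ => hB _ _ _ _
  have hRic : RicB x y = ricci e ε B x y := hRicB x y
  rw [hRic, hB', ricci_add, ricci_add, ricci_smul, ricci_smul, ricci_smul, hP.ricci_kn_self ha,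
    hP.ricci_kn_left, hP.ricci_kn_left, hP.sum_mul_apply_self, hP.trace_eq_sum]
  simp only [ha, Fintype.card_fin]
  field_simp
  ring

/-- if `B = (φ/2)·A∧A + μ·g∧A + (η/2)·g∧g` with `φ ≠ 0`, then
`A² = φ⁻¹·((φ·tr(A) + (n−2)μ)·A + (μ·tr(A) + (n−1)η)·g − Ric(B))`. -/
theorem stmt_17 {V : Type*} [AddCommGroup V] [Module ℝ V] [FiniteDimensional ℝ V]
    (n : ℕ) (hn3 : 3 ≤ n) (hdim : Module.finrank ℝ V = n)
    (g A : V →ₗ[ℝ] V →ₗ[ℝ] ℝ)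
    (hg : ∀ x y, g x y = g y x)
    (hgnd : ∀ x : V, (∀ y : V, g x y = 0) → x = 0)
    (hA : ∀ x y, A x y = A y x)
    (a : V →ₗ[ℝ] V) (ha : ∀ x y, g (a x) y = A x y)
    (e : Module.Basis (Fin n) ℝ V) (ε : Fin n → ℝ) (hε : ∀ i, ε i = 1 ∨ ε i = -1)
    (horth : ∀ i j, g (e i) (e j) = if i = j then ε i else 0)
    (B : V → V → V → V → ℝ)
    (RicB : V → V → ℝ)
    (hRicB : ∀ x y, RicB x y = ∑ i, ε i * B (e i) x y (e i))
    (φ μ η : ℝ) (hφ : φ ≠ 0)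
    (hB : ∀ x₁ x₂ x₃ x₄ : V,
      B x₁ x₂ x₃ x₄
        = (φ / 2) * kn (fun u v => A u v) (fun u v => A u v) x₁ x₂ x₃ x₄
          + μ * kn (fun u v => g u v) (fun u v => A u v) x₁ x₂ x₃ x₄
          + (η / 2) * kn (fun u v => g u v) (fun u v => g u v) x₁ x₂ x₃ x₄) :
    ∀ x y : V,
      A (a x) y
        = φ⁻¹ * ((φ * LinearMap.trace ℝ V a + ((n : ℝ) - 2) * μ) * A x y
            + (μ * LinearMap.trace ℝ V a + ((n : ℝ) - 1) * η) * g x y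
            - RicB x y) :=
  stmt_17_general n g A a ha e ε hε horth B RicB hRicB φ μ η hφ hB
end

section
/- Let (V,g) be an n-dimensional (n ≥ 3) real vector space with a nondegenerate symmetric bilinear form g, and let B be a generalized curvature tensor with B = (φ/2)·Ric(B)∧Ric(B) + μ·g∧Ric(B) + (η/2)·g∧g, φ ≠ 0. Then (Ric(B))² = α₁·Ric(B) + α₂·g with α₁ = κ(B) + φ⁻¹((n−2)μ − 1) and α₂ = φ⁻¹(μ·κ(B) + (n−1)η), where κ(B) = tr_g(Ric(B)) and (Ric(B))² is the g-square of Ric(B). -/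
variable {V : Type*} [AddCommGroup V] [Module ℝ V]

/-- A generalized curvature tensor: skew in the first and last pairs, symmetric under
pair interchange, and satisfying the first Bianchi identity. -/
def IsGenCurv (R : V → V → V → V → ℝ) : Prop :=
  (∀ x₁ x₂ x₃ x₄, R x₂ x₁ x₃ x₄ = - R x₁ x₂ x₃ x₄) ∧
  (∀ x₁ x₂ x₃ x₄, R x₁ x₂ x₄ x₃ = - R x₁ x₂ x₃ x₄) ∧
  (∀ x₁ x₂ x₃ x₄, R x₁ x₂ x₃ x₄ = R x₃ x₄ x₁ x₂) ∧
  (∀ x₁ x₂ x₃ x₄, R x₁ x₂ x₃ x₄ + R x₂ x₃ x₁ x₄ + R x₃ x₁ x₂ x₄ = 0)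

/-! A Roter-type tensor is a quadratic polynomial in `Ric(B)` under the Kulkarni–Nomizu product,
so contracting the defining identity `B = (φ/2) S∧S + μ g∧S + (η/2) g∧g` once produces
`Ric(B) = S` on the left and, on the right, a combination of `S`, `g` and the single quadratic
term `S²` coming from `S∧S`. Since `φ ≠ 0`, this identity can be solved for `S²`. -/

section Contraction

variable {ι : Type*} [Fintype ι] [DecidableEq ι] (g : V →ₗ[ℝ] V →ₗ[ℝ] ℝ) {e : Module.Basis ι ℝ V}
  {ε : ι → ℝ}

theorem apply_basis_eq_sign_mul_repr (horth : ∀ i j, g (e i) (e j) = if i = j then ε i else 0)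
    (u : V) (i : ι) : g u (e i) = ε i * e.repr u i := by
  conv_lhs => rw [← e.sum_repr u]
  simp only [map_sum, LinearMap.sum_apply, map_smul, LinearMap.smul_apply, horth, smul_eq_mul,
    mul_ite, mul_zero, Finset.sum_ite_eq', Finset.mem_univ, if_true]
  ring

variable (hε : ∀ i, ε i * ε i = 1) (horth : ∀ i j, g (e i) (e j) = if i = j then ε i else 0)
include hε horth

theorem sum_sign_mul_apply_basis_mul (f : V →ₗ[ℝ] ℝ) (u : V) :
    ∑ i, ε i * (g u (e i) * f (e i)) = f u := by
  conv_rhs => rw [← e.sum_repr u]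
  simp only [map_sum, map_smul, smul_eq_mul, apply_basis_eq_sign_mul_repr g horth]
  refine Finset.sum_congr rfl fun i _ => ?_
  linear_combination (e.repr u i * f (e i)) * hε i

theorem trace_eq_sum_sign_mul (a : V →ₗ[ℝ] V) :
    LinearMap.trace ℝ V a = ∑ i, ε i * g (a (e i)) (e i) := by
  rw [LinearMap.trace_eq_matrix_trace ℝ e, Matrix.trace]
  refine Finset.sum_congr rfl fun i _ => ?_
  rw [Matrix.diag_apply, LinearMap.toMatrix_apply, apply_basis_eq_sign_mul_repr g horth]
  linear_combination -(e.repr (a (e i)) i) * hε i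

theorem trace_id_eq_card : LinearMap.trace ℝ V LinearMap.id = Fintype.card ι := by
  simp [trace_eq_sum_sign_mul g hε horth, horth, hε]

theorem sum_sign_mul_kn_eq {A C : V → V → ℝ} {a c : V →ₗ[ℝ] V}
    (hA : ∀ u v, A u v = g (a u) v) (hC : ∀ u v, C u v = g (c u) v) (x y : V) :
    ∑ i, ε i * kn A C (e i) x y (e i)
      = LinearMap.trace ℝ V a * C x y + LinearMap.trace ℝ V c * A x y
        - g (a (c x)) y - g (c (a x)) y := by
  have hac : ∑ i, ε i * (g (c x) (e i) * g (a (e i)) y) = g (a (c x)) y :=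
    sum_sign_mul_apply_basis_mul g hε horth ((g.flip y).comp a) (c x)
  have hca : ∑ i, ε i * (g (a x) (e i) * g (c (e i)) y) = g (c (a x)) y :=
    sum_sign_mul_apply_basis_mul g hε horth ((g.flip y).comp c) (a x)
  rw [trace_eq_sum_sign_mul g hε horth a, trace_eq_sum_sign_mul g hε horth c, ← hac, ← hca,
    Finset.sum_mul, Finset.sum_mul, ← Finset.sum_add_distrib, ← Finset.sum_sub_distrib,
    ← Finset.sum_sub_distrib]
  refine Finset.sum_congr rfl fun i _ => ?_
  simp only [kn, hA, hC]
  ring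

end Contraction

theorem stmt_18_general {V : Type*} [AddCommGroup V] [Module ℝ V]
    (n : ℕ)
    (g : V →ₗ[ℝ] V →ₗ[ℝ] ℝ)
    (e : Module.Basis (Fin n) ℝ V) (ε : Fin n → ℝ) (hε : ∀ i, ε i = 1 ∨ ε i = -1)
    (horth : ∀ i j, g (e i) (e j) = if i = j then ε i else 0)
    (B : V → V → V → V → ℝ)
    (S : V → V → ℝ) (hS : ∀ x y, S x y = ∑ i, ε i * B (e i) x y (e i))
    (s : V →ₗ[ℝ] V) (hs : ∀ x y, g (s x) y = S x y)
    (φ μ η : ℝ) (hφ : φ ≠ 0)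
    (hB : ∀ x₁ x₂ x₃ x₄ : V,
      B x₁ x₂ x₃ x₄
        = (φ / 2) * kn S S x₁ x₂ x₃ x₄
          + μ * kn (fun u v => g u v) S x₁ x₂ x₃ x₄
          + (η / 2) * kn (fun u v => g u v) (fun u v => g u v) x₁ x₂ x₃ x₄) :
    ∀ x y : V,
      S (s x) y
        = (LinearMap.trace ℝ V s + φ⁻¹ * (((n : ℝ) - 2) * μ - 1)) * S x y
          + (φ⁻¹ * (μ * LinearMap.trace ℝ V s + ((n : ℝ) - 1) * η)) * g x y := by
  intro x y
  have hε2 : ∀ i, ε i * ε i = 1 := fun i => by rcases hε i with h | h <;> norm_num [h]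
  have hSs : ∀ u v, S u v = g (s u) v := fun u v => (hs u v).symm
  have hgid : ∀ u v, g u v = g ((LinearMap.id : V →ₗ[ℝ] V) u) v := fun _ _ => rfl
  have hRic : S x y = (φ / 2) * ∑ i, ε i * kn S S (e i) x y (e i)
      + μ * ∑ i, ε i * kn (fun u v => g u v) S (e i) x y (e i)
      + (η / 2) * ∑ i, ε i * kn (fun u v => g u v) (fun u v => g u v) (e i) x y (e i) := by
    simp only [hS, hB, Finset.mul_sum, ← Finset.sum_add_distrib]
    exact Finset.sum_congr rfl fun i _ => by ring
  rw [sum_sign_mul_kn_eq g hε2 horth hSs hSs, sum_sign_mul_kn_eq g hε2 horth hgid hSs,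
    sum_sign_mul_kn_eq g hε2 horth hgid hgid, trace_id_eq_card g hε2 horth, Fintype.card_fin]
    at hRic
  simp only [LinearMap.id_apply, ← hSs] at hRic
  field_simp
  linear_combination hRic

/-- for a Roter-type generalized curvature tensor
`B = (φ/2)·Ric(B)∧Ric(B) + μ·g∧Ric(B) + (η/2)·g∧g` with `φ ≠ 0`, one has
`(Ric B)² = α₁·Ric(B) + α₂·g` with `α₁ = κ(B) + φ⁻¹((n−2)μ − 1)` and
`α₂ = φ⁻¹(μ·κ(B) + (n−1)η)`. -/
theorem stmt_18 {V : Type*} [AddCommGroup V] [Module ℝ V] [FiniteDimensional ℝ V]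
    (n : ℕ) (hn3 : 3 ≤ n) (hdim : Module.finrank ℝ V = n)
    (g : V →ₗ[ℝ] V →ₗ[ℝ] ℝ)
    (hg : ∀ x y, g x y = g y x)
    (hgnd : ∀ x : V, (∀ y : V, g x y = 0) → x = 0)
    (e : Module.Basis (Fin n) ℝ V) (ε : Fin n → ℝ) (hε : ∀ i, ε i = 1 ∨ ε i = -1)
    (horth : ∀ i j, g (e i) (e j) = if i = j then ε i else 0)
    (B : V → V → V → V → ℝ) (hBcurv : IsGenCurv B)
    (S : V → V → ℝ) (hS : ∀ x y, S x y = ∑ i, ε i * B (e i) x y (e i))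
    (s : V →ₗ[ℝ] V) (hs : ∀ x y, g (s x) y = S x y)
    (φ μ η : ℝ) (hφ : φ ≠ 0)
    (hB : ∀ x₁ x₂ x₃ x₄ : V,
      B x₁ x₂ x₃ x₄
        = (φ / 2) * kn S S x₁ x₂ x₃ x₄
          + μ * kn (fun u v => g u v) S x₁ x₂ x₃ x₄
          + (η / 2) * kn (fun u v => g u v) (fun u v => g u v) x₁ x₂ x₃ x₄) :
    ∀ x y : V,
      S (s x) y
        = (LinearMap.trace ℝ V s + φ⁻¹ * (((n : ℝ) - 2) * μ - 1)) * S x y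
          + (φ⁻¹ * (μ * LinearMap.trace ℝ V s + ((n : ℝ) - 1) * η)) * g x y :=
  stmt_18_general n g e ε hε horth B S hS s hs φ μ η hφ hB
end
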